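/- For n = 1, the vector w₃ = −√2·(x ⊗ v₀) + 1 ⊗ v₁ + x² ⊗ v₂ in ℂ[x] ⊗ ℂ^{1|2} is annihilated by the action X_{−δ}(x^k ⊗ v_j) = (1/√2)k x^{k−1} ⊗ v_j + (−1)^k x^k ⊗ T_{−1}(v_j), where T_{−1}(v₀) = −v₂, T_{−1}(v₁) = v₀, T_{−1}(v₂) = 0. -/

import Mathlib

open Finsupp

noncomputable section

abbrev V (n : ℕ) : Type := ((Fin n →₀ ℕ) × Fin (2*n+1)) →₀ ℂ

def b {n : ℕ} (k : Fin n →₀ ℕ) (j : Fin (2*n+1)) : V n := Finsupp.single (k, j) 1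

def mkOp {n : ℕ} (g : (Fin n →₀ ℕ) × Fin (2*n+1) → V n) : V n →ₗ[ℂ] V n :=
  Finsupp.lsum ℂ fun a => LinearMap.toSpanSingleton ℂ (V n) (g a)

def deg {n : ℕ} (k : Fin n →₀ ℕ) : ℕ := k.sum fun _ v => v

def sgn {n : ℕ} (k : Fin n →₀ ℕ) : ℂ := (-1) ^ deg k

def rt2 : ℂ := Real.sqrt 2

def idx0 {n : ℕ} : Fin (2*n+1) := ⟨0, by omega⟩

def idxLo {n : ℕ} (i : Fin n) : Fin (2*n+1) := ⟨i.1+1, by have := i.isLt; omega⟩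

def idxHi {n : ℕ} (i : Fin n) : Fin (2*n+1) := ⟨n+i.1+1, by have := i.isLt; omega⟩

/-- `T_i` applied to `x^k ⊗ v_j` (without the parity sign). -/
def TpApp {n : ℕ} (i : Fin n) (k : Fin n →₀ ℕ) (j : Fin (2*n+1)) : V n :=
  if j = idx0 then b k (idxLo i) else if j = idxHi i then b k idx0 else 0

/-- `T_{-i}` applied to `x^k ⊗ v_j` (without the parity sign). -/
def TmApp {n : ℕ} (i : Fin n) (k : Fin n →₀ ℕ) (j : Fin (2*n+1)) : V n :=
  if j = idx0 then -(b k (idxHi i)) else if j = idxLo i then b k idx0 else 0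

/-- The action of the odd root vector `X_{δ_j}` on `ℂ[x] ⊗ ℂ^{1|2n}`. -/
def Xplus {n : ℕ} (jj : Fin n) : V n →ₗ[ℂ] V n :=
  mkOp fun p => rt2⁻¹ • b (p.1 + Finsupp.single jj 1) p.2 + sgn p.1 • TpApp jj p.1 p.2

/-- The action of the odd root vector `X_{-δ_i}` on `ℂ[x] ⊗ ℂ^{1|2n}`. -/
def Xminus {n : ℕ} (i : Fin n) : V n →ₗ[ℂ] V n :=
  mkOp fun p => (rt2⁻¹ * (p.1 i : ℂ)) • b (p.1 - Finsupp.single i 1) p.2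
    + sgn p.1 • TmApp i p.1 p.2

/-- `Γ_{w₂} = 1⊗1 + √2 ∑ ∂_i ⊗ T_i - √2 ∑ x_i ⊗ T_{-i}`. -/
def Gamma2 {n : ℕ} : V n →ₗ[ℂ] V n :=
  mkOp fun p => b p.1 p.2
    + rt2 • ∑ i : Fin n, (sgn p.1 * (p.1 i : ℂ)) • TpApp i (p.1 - Finsupp.single i 1) p.2
    - rt2 • ∑ i : Fin n, sgn p.1 • TmApp i (p.1 + Finsupp.single i 1) p.2

/-- `Γ_{w₁} = 1⊗1 - √2 ∑ ∂_i ⊗ T_i + √2 ∑ x_i ⊗ T_{-i}`. -/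
def Gamma1 {n : ℕ} : V n →ₗ[ℂ] V n :=
  mkOp fun p => b p.1 p.2
    - rt2 • ∑ i : Fin n, (sgn p.1 * (p.1 i : ℂ)) • TpApp i (p.1 - Finsupp.single i 1) p.2
    + rt2 • ∑ i : Fin n, sgn p.1 • TmApp i (p.1 + Finsupp.single i 1) p.2

/-! On basis vectors `X_{-δ}` is `(1/√2) ∂ₓ` plus the signed `T_{-1}`, and on `w₃` the four nonzero
contributions cancel in pairs: `x ⊗ v₀` and `1 ⊗ v₁` both produce `1 ⊗ v₀` (with opposite signs),
while `x ⊗ v₀` (through `T_{-1} v₀ = -v₂`) and `x² ⊗ v₂` (through `∂ₓ x² = 2x`, as `2/√2 = √2`)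
both produce `√2 · x ⊗ v₂`, again with opposite signs. -/

theorem rt2_mul_self : rt2 * rt2 = 2 := by
  rw [rt2, ← Complex.ofReal_mul, Real.mul_self_sqrt zero_le_two, Complex.ofReal_ofNat]

theorem rt2_ne_zero : rt2 ≠ 0 := by
  intro h
  simpa [h] using rt2_mul_self

theorem inv_rt2_mul_two : rt2⁻¹ * 2 = rt2 := by
  rw [inv_mul_eq_div, div_eq_iff rt2_ne_zero, rt2_mul_self]

theorem sgn_single {n : ℕ} (i : Fin n) (m : ℕ) : sgn (Finsupp.single i m) = (-1) ^ m := by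
  simp [sgn, deg]

theorem mkOp_b {n : ℕ} (g : (Fin n →₀ ℕ) × Fin (2*n+1) → V n) (k : Fin n →₀ ℕ)
    (j : Fin (2*n+1)) : mkOp g (b k j) = g (k, j) := by
  simp [mkOp, b]

section Xminus

variable {n : ℕ} (i : Fin n) (k : Fin n →₀ ℕ)

theorem idxHi_ne_idx0 : idxHi i ≠ idx0 := by
  simp [idxHi, idx0, Fin.ext_iff]

theorem idxLo_ne_idx0 : idxLo i ≠ idx0 := by
  simp [idxLo, idx0, Fin.ext_iff]

theorem idxHi_ne_idxLo : idxHi i ≠ idxLo i := by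
  have := i.pos
  simp [idxHi, idxLo, Fin.ext_iff]
  omega

theorem Xminus_b_idx0 :
    Xminus i (b k idx0) = (rt2⁻¹ * k i) • b (k - single i 1) idx0 - sgn k • b k (idxHi i) := by
  simp [Xminus, mkOp_b, TmApp, sub_eq_add_neg]

theorem Xminus_b_idxLo :
    Xminus i (b k (idxLo i)) = (rt2⁻¹ * k i) • b (k - single i 1) (idxLo i) + sgn k • b k idx0 := by
  simp [Xminus, mkOp_b, TmApp, idxLo_ne_idx0]

theorem Xminus_b_idxHi :
    Xminus i (b k (idxHi i)) = (rt2⁻¹ * k i) • b (k - single i 1) (idxHi i) := by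
  simp [Xminus, mkOp_b, TmApp, idxHi_ne_idx0, idxHi_ne_idxLo]

end Xminus

/-- For `n = 1`, `w₃ = -√2 (x ⊗ v₀) + 1 ⊗ v₁ + x² ⊗ v₂` is annihilated by `X_{-δ}`. -/
theorem stmt6 :
    Xminus (n := 1) 0 ((-rt2) • b (Finsupp.single 0 1) idx0 + b 0 (idxLo 0)
      + b (Finsupp.single 0 2) (idxHi 0)) = 0 := by
  have hsub : (single 0 2 - single 0 1 : Fin 1 →₀ ℕ) = single 0 1 := by
    rw [← single_tsub]
  simp only [map_add, map_smul, Xminus_b_idx0, Xminus_b_idxLo, Xminus_b_idxHi, hsub,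
    sgn_single, tsub_self, Finsupp.coe_zero, Pi.zero_apply, single_eq_same]
  simp [sgn, deg, smul_smul, rt2_ne_zero, inv_rt2_mul_two]
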